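/- arXiv:2507.02650 — 3 statements merged into one kernel-verified Lean document; each statement's English description precedes it below -/
import Mathlib

section
/- Among all k-uniform linear unicyclic hypergraphs with m ≥ 3 hyperedges (modelled by their degree sequences, which consist of m(k-1) positive integers summing to mk, with at least three vertices of degree ≥ 2 on the unique cycle), the sum of squared degrees Σ_i d_i^2 is maximized exactly when the degree sequence is that of C_3^(k) ⊙ S_{m-3}^(k), namely one vertex of degree m-1, two vertices of degree 2, and all remaining m(k-1)-3 vertices of degree 1. -/
private lemma stmt9_sum_sub_one (q : Multiset ℕ) (h : ∀ x ∈ q, 1 ≤ x) :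
    (q.map (· - 1)).sum + Multiset.card q = q.sum := by
  induction q using Multiset.induction with
  | empty => simp
  | cons a s ih =>
    have ha := h a (Multiset.mem_cons_self a s)
    have ihs := ih (fun x hx => h x (Multiset.mem_cons_of_mem hx))
    simp only [Multiset.map_cons, Multiset.sum_cons, Multiset.card_cons]
    omega

private lemma stmt9_sq_decomp (q : Multiset ℕ) (h : ∀ x ∈ q, 1 ≤ x) :
    (q.map (· ^ 2)).sum =
      ((q.map (· - 1)).map (· ^ 2)).sum + 2 * (q.map (· - 1)).sum + Multiset.card q := by
  induction q using Multiset.induction with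
  | empty => simp
  | cons a s ih =>
    have ha := h a (Multiset.mem_cons_self a s)
    have ihs := ih (fun x hx => h x (Multiset.mem_cons_of_mem hx))
    obtain ⟨a', rfl⟩ : ∃ a', a = a' + 1 := ⟨a - 1, by omega⟩
    simp only [Multiset.map_cons, Multiset.sum_cons, Multiset.card_cons,
      Nat.add_sub_cancel]
    have : (a' + 1) ^ 2 = a' ^ 2 + 2 * a' + 1 := by ring
    omega

private lemma stmt9_map_sub_add (q : Multiset ℕ) (h : ∀ x ∈ q, 1 ≤ x) :
    (q.map (· - 1)).map (· + 1) = q := by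
  rw [Multiset.map_map]
  have hc : ∀ x ∈ q, ((· + 1) ∘ (· - 1)) x = id x := by
    intro x hx
    have := h x hx
    simp only [Function.comp_apply, id]
    omega
  rw [Multiset.map_congr rfl hc, Multiset.map_id]

/-- Core: positive entries, sum `m`, at least 3 entries. -/
private lemma stmt9_core : ∀ (n m : ℕ) (p : Multiset ℕ), Multiset.card p = n + 3 →
    (∀ x ∈ p, 1 ≤ x) → p.sum = m →
    (p.map (· ^ 2)).sum ≤ (m - 2) ^ 2 + 2 ∧
    ((p.map (· ^ 2)).sum = (m - 2) ^ 2 + 2 ↔ p = (m - 2) ::ₘ 1 ::ₘ 1 ::ₘ 0) := by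
  intro n
  induction n with
  | zero =>
    intro m p hcard hpos hsum
    obtain ⟨a, b, c, rfl⟩ := Multiset.card_eq_three.mp hcard
    have ha := hpos a (by simp)
    have hb := hpos b (by simp)
    have hc := hpos c (by simp)
    obtain ⟨x, rfl⟩ : ∃ x, a = x + 1 := ⟨a - 1, by omega⟩
    obtain ⟨y, rfl⟩ : ∃ y, b = y + 1 := ⟨b - 1, by omega⟩
    obtain ⟨z, rfl⟩ : ∃ z, c = z + 1 := ⟨c - 1, by omega⟩
    have hm : m = x + y + z + 3 := by
      simp only [Multiset.insert_eq_cons, Multiset.sum_cons, Multiset.sum_singleton] at hsum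
      omega
    subst hm
    have e1 : x + y + z + 3 - 2 = x + y + z + 1 := by omega
    rw [e1]
    have hmap : ((({x + 1, y + 1, z + 1} : Multiset ℕ)).map (· ^ 2)).sum
        = (x + 1) ^ 2 + (y + 1) ^ 2 + (z + 1) ^ 2 := by
      simp only [Multiset.insert_eq_cons, Multiset.map_cons, Multiset.sum_cons,
        Multiset.map_singleton, Multiset.sum_singleton]
      ring
    rw [hmap]
    constructor
    · nlinarith [Nat.zero_le (x * y), Nat.zero_le (y * z), Nat.zero_le (x * z)]
    · constructor
      · intro h
        have h0 : x * y + y * z + x * z = 0 := by nlinarith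
        obtain ⟨h01, h3⟩ := Nat.add_eq_zero.mp h0
        obtain ⟨h1, h2⟩ := Nat.add_eq_zero.mp h01
        have htri : ∀ u : ℕ, (1 ::ₘ 1 ::ₘ (u + 1) ::ₘ (0 : Multiset ℕ))
            = (u + 1) ::ₘ 1 ::ₘ 1 ::ₘ 0 := by
          intro u
          rw [Multiset.cons_swap 1 (u + 1), Multiset.cons_swap 1 (u + 1)]
        have htri2 : ∀ u : ℕ, (1 ::ₘ (u + 1) ::ₘ 1 ::ₘ (0 : Multiset ℕ))
            = (u + 1) ::ₘ 1 ::ₘ 1 ::ₘ 0 := fun u => Multiset.cons_swap 1 (u + 1) _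
        rcases Nat.mul_eq_zero.mp h1 with hx0 | hy0
        · rcases Nat.mul_eq_zero.mp h2 with hy0 | hz0
          · subst hx0; subst hy0
            show (0 + 1) ::ₘ (0 + 1) ::ₘ (z + 1) ::ₘ 0 = (0 + 0 + z + 1) ::ₘ 1 ::ₘ 1 ::ₘ 0
            simp only [Nat.zero_add]
            exact htri z
          · subst hx0; subst hz0
            show (0 + 1) ::ₘ (y + 1) ::ₘ (0 + 1) ::ₘ 0 = (0 + y + 0 + 1) ::ₘ 1 ::ₘ 1 ::ₘ 0
            simp only [Nat.zero_add, Nat.add_zero]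
            exact htri2 y
        · subst hy0
          rcases Nat.mul_eq_zero.mp h3 with hx0 | hz0
          · subst hx0
            show (0 + 1) ::ₘ (0 + 1) ::ₘ (z + 1) ::ₘ 0 = (0 + 0 + z + 1) ::ₘ 1 ::ₘ 1 ::ₘ 0
            simp only [Nat.zero_add]
            exact htri z
          · subst hz0
            show (x + 1) ::ₘ (0 + 1) ::ₘ (0 + 1) ::ₘ 0 = (x + 0 + 0 + 1) ::ₘ 1 ::ₘ 1 ::ₘ 0
            simp only [Nat.zero_add, Nat.add_zero]
      · intro h
        have hcards := congrArg (fun t => (Multiset.map (· ^ 2) t).sum) h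
        simp only [Multiset.insert_eq_cons, Multiset.map_cons, Multiset.sum_cons,
          Multiset.map_singleton, Multiset.sum_singleton, Multiset.map_zero,
          Multiset.sum_zero] at hcards
        have : (x + 1) ^ 2 + (y + 1) ^ 2 + (z + 1) ^ 2
            = (x + y + z + 1) ^ 2 + 1 ^ 2 + (1 ^ 2 + 0) := by omega
        rw [this]
        norm_num
  | succ n ih =>
    intro m p hcard hpos hsum
    have hpcard : 0 < Multiset.card p := by omega
    obtain ⟨a, ha⟩ := Multiset.card_pos_iff_exists_mem.mp hpcard
    have hercard : 0 < Multiset.card (p.erase a) := by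
      have h := Multiset.card_erase_add_one ha
      omega
    obtain ⟨b, hb⟩ := Multiset.card_pos_iff_exists_mem.mp hercard
    obtain ⟨q, rfl⟩ : ∃ q, p = a ::ₘ b ::ₘ q :=
      ⟨(p.erase a).erase b, by rw [Multiset.cons_erase hb, Multiset.cons_erase ha]⟩
    have ha1 : 1 ≤ a := hpos a (by simp)
    have hb1 : 1 ≤ b := hpos b (by simp)
    have hqpos : ∀ x ∈ (a + b) ::ₘ q, 1 ≤ x := by
      intro x hx
      rcases Multiset.mem_cons.mp hx with h | h
      · omega
      · exact hpos x (by simp [h])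
    have hqcard : Multiset.card ((a + b) ::ₘ q) = n + 3 := by
      simp only [Multiset.card_cons] at hcard ⊢
      omega
    have hqsum : ((a + b) ::ₘ q).sum = m := by
      simp only [Multiset.sum_cons] at hsum ⊢
      omega
    obtain ⟨ihle, _⟩ := ih m ((a + b) ::ₘ q) hqcard hqpos hqsum
    have hstrict : ((a ::ₘ b ::ₘ q).map (· ^ 2)).sum < (((a + b) ::ₘ q).map (· ^ 2)).sum := by
      simp only [Multiset.map_cons, Multiset.sum_cons]
      have hab : 1 * 1 ≤ a * b := Nat.mul_le_mul ha1 hb1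
      have : a ^ 2 + b ^ 2 < (a + b) ^ 2 := by nlinarith
      linarith
    have hlt : ((a ::ₘ b ::ₘ q).map (· ^ 2)).sum < (m - 2) ^ 2 + 2 :=
      lt_of_lt_of_le hstrict ihle
    refine ⟨le_of_lt hlt, ?_, ?_⟩
    · intro h
      exact absurd h (Nat.ne_of_lt hlt)
    · intro h
      exfalso
      have hcards := congrArg Multiset.card h
      simp only [Multiset.card_cons, Multiset.card_zero] at hcards hcard
      omega

private lemma stmt9_main (m N : ℕ) (hm : 3 ≤ m) (hN : 3 ≤ N) (s : Multiset ℕ)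
    (hcard : Multiset.card s = N) (hpos : ∀ x ∈ s, 1 ≤ x)
    (hsum : s.sum = N + m)
    (hcyc : 3 ≤ Multiset.card (s.filter (fun x => 2 ≤ x))) :
    (s.map (· ^ 2)).sum ≤ (m - 1) ^ 2 + 2 * 2 ^ 2 + (N - 3) ∧
    ((s.map (· ^ 2)).sum = (m - 1) ^ 2 + 2 * 2 ^ 2 + (N - 3) ↔
      s = (m - 1) ::ₘ 2 ::ₘ 2 ::ₘ Multiset.replicate (N - 3) 1) := by
  obtain ⟨μ, rfl⟩ : ∃ μ, m = μ + 3 := ⟨m - 3, by omega⟩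
  obtain ⟨ν, rfl⟩ : ∃ ν, N = ν + 3 := ⟨N - 3, by omega⟩
  have e1 : μ + 3 - 2 = μ + 1 := by omega
  have e2 : μ + 3 - 1 = μ + 2 := by omega
  have e3 : ν + 3 - 3 = ν := by omega
  rw [e2, e3]
  set big := s.filter (fun x => 2 ≤ x) with hbigdef
  set small := s.filter (fun x => ¬ 2 ≤ x) with hsmalldef
  have hsplit : big + small = s := Multiset.filter_add_not _ s
  have hsmall1 : small = Multiset.replicate (Multiset.card small) 1 := by
    rw [Multiset.eq_replicate_card]
    intro x hx
    have h2 := Multiset.of_mem_filter hx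
    have h1 := hpos x (Multiset.mem_of_mem_filter hx)
    omega
  have hbj : Multiset.card big + Multiset.card small = ν + 3 := by
    rw [← hcard, ← hsplit, Multiset.card_add]
  have hbig2 : ∀ x ∈ big, 2 ≤ x := fun x hx => Multiset.of_mem_filter hx
  have hbig1 : ∀ x ∈ big, 1 ≤ x := fun x hx => le_trans one_le_two (hbig2 x hx)
  have htpos : ∀ x ∈ big.map (· - 1), 1 ≤ x := by
    intro x hx
    obtain ⟨y, hy, rfl⟩ := Multiset.mem_map.mp hx
    have := hbig2 y hy
    omega
  have htcard : Multiset.card (big.map (· - 1)) = Multiset.card big := by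
    rw [Multiset.card_map]
  have hts : (big.map (· - 1)).sum + Multiset.card big = big.sum :=
    stmt9_sum_sub_one big hbig1
  have hsums : big.sum + small.sum = s.sum := by rw [← hsplit, Multiset.sum_add]
  have hsmallsum : small.sum = Multiset.card small := by
    rw [hsmall1]
    simp
  have htsum : (big.map (· - 1)).sum = μ + 3 := by omega
  obtain ⟨c3, hc3⟩ : ∃ c3, Multiset.card big = c3 + 3 := ⟨Multiset.card big - 3, by omega⟩
  obtain ⟨hXle, hXiff⟩ := stmt9_core c3 (μ + 3) (big.map (· - 1)) (by omega) htpos htsum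
  rw [e1] at hXle hXiff
  have hsqs : (s.map (· ^ 2)).sum = (big.map (· ^ 2)).sum + (small.map (· ^ 2)).sum := by
    rw [← hsplit, Multiset.map_add, Multiset.sum_add]
  have hsmallsq : (small.map (· ^ 2)).sum = Multiset.card small := by
    rw [hsmall1]
    simp
  have hbigsq : (big.map (· ^ 2)).sum
      = ((big.map (· - 1)).map (· ^ 2)).sum + 2 * (big.map (· - 1)).sum
        + Multiset.card big := stmt9_sq_decomp big hbig1
  have htot : (s.map (· ^ 2)).sum
      = ((big.map (· - 1)).map (· ^ 2)).sum + 2 * (μ + 3) + (ν + 3) := by omega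
  have q3 : (μ + 2) ^ 2 = (μ + 1) ^ 2 + 2 * μ + 3 := by ring
  constructor
  · rw [htot]
    linarith [hXle, q3]
  · constructor
    · intro h
      have hX : ((big.map (· - 1)).map (· ^ 2)).sum = (μ + 1) ^ 2 + 2 := by
        rw [htot] at h
        linarith [h, q3]
      have ht3 := hXiff.mp hX
      have hbig3 : big = (μ + 2) ::ₘ 2 ::ₘ 2 ::ₘ 0 := by
        have hba := stmt9_map_sub_add big hbig1
        rw [← hba, ht3]
        simp only [Multiset.map_cons, Multiset.map_zero]
      have hbcard3 : Multiset.card big = 3 := by rw [hbig3]; simp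
      have hj : Multiset.card small = ν := by omega
      rw [← hsplit, hbig3, hsmall1, hj]
      simp [Multiset.cons_add]
    · intro h
      rw [h]
      simp only [Multiset.map_cons, Multiset.map_replicate, Multiset.sum_cons,
        Multiset.sum_replicate, one_pow, smul_eq_mul, mul_one]
      ring

/-- Among degree sequences of `k`-uniform linear unicyclic hypergraphs with `m ≥ 3`
hyperedges (`m(k-1)` positive integers summing to `mk`, at least three entries `≥ 2`),
the sum of squares is maximized exactly by the degree sequence of
`C₃^{(k)} ⊙ S_{m-3}^{(k)}`: one vertex of degree `m-1`, two of degree `2`,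
and `m(k-1)-3` of degree `1`. -/
theorem stmt_9 (m k : ℕ) (hm : 3 ≤ m) (hk : 2 ≤ k)
    (d : Fin (m * (k - 1)) → ℕ) (hpos : ∀ i, 1 ≤ d i)
    (hsum : ∑ i, d i = m * k)
    (hcyc : 3 ≤ (Finset.univ.filter fun i => 2 ≤ d i).card) :
    ∑ i, (d i) ^ 2 ≤ (m - 1) ^ 2 + 2 * 2 ^ 2 + (m * (k - 1) - 3) ∧
    (∑ i, (d i) ^ 2 = (m - 1) ^ 2 + 2 * 2 ^ 2 + (m * (k - 1) - 3) ↔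
      Finset.univ.val.map d
        = (m - 1) ::ₘ 2 ::ₘ 2 ::ₘ Multiset.replicate (m * (k - 1) - 3) 1) := by
  have hNm : m * (k - 1) + m = m * k := by
    have h1 : k - 1 + 1 = k := by omega
    calc m * (k - 1) + m = m * ((k - 1) + 1) := by ring
      _ = m * k := by rw [h1]
  have hN3 : 3 ≤ m * (k - 1) := by
    calc 3 = 3 * 1 := by norm_num
      _ ≤ m * (k - 1) := Nat.mul_le_mul hm (by omega)
  set s := Finset.univ.val.map d with hsdef
  have hscard : Multiset.card s = m * (k - 1) := by
    simp [hsdef]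
  have hspos : ∀ x ∈ s, 1 ≤ x := by
    intro x hx
    obtain ⟨i, _, rfl⟩ := Multiset.mem_map.mp hx
    exact hpos i
  have hssum : s.sum = m * (k - 1) + m := by
    rw [hNm, hsdef, ← Finset.sum_eq_multiset_sum]
    exact hsum
  have hsq : (s.map (· ^ 2)).sum = ∑ i, (d i) ^ 2 := by
    rw [hsdef, Multiset.map_map, ← Finset.sum_eq_multiset_sum]
    rfl
  have hfil : 3 ≤ Multiset.card (s.filter (fun x => 2 ≤ x)) := by
    rw [hsdef, Multiset.filter_map, Multiset.card_map]
    exact hcyc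
  obtain ⟨L, E⟩ := stmt9_main m (m * (k - 1)) hm hN3 s hscard hspos hssum hfil
  rw [hsq] at L E
  exact ⟨L, E⟩
end

section
/- Among all k-uniform hypertrees with m ≥ 2 hyperedges (degree sequences: m(k-1)+1 positive integers summing to mk, not the hyperstar), the sum of squared degrees Σ_i d_i^2 is maximized, after excluding the hyperstar's sequence, by the sequence with one vertex of degree m-1, one vertex of degree 2, and all other vertices of degree 1; the value is (m-1)^2 + 4 + (m(k-1)-1). -/
lemma sumsq_le' (Q : Multiset ℕ) : (Q.map (fun x => x^2)).sum ≤ Q.sum ^ 2 := by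
  induction Q using Multiset.induction with
  | empty => simp
  | cons a s ih =>
    simp only [Multiset.map_cons, Multiset.sum_cons]
    calc a^2 + (Multiset.map (fun x => x^2) s).sum ≤ a^2 + s.sum^2 := by omega
      _ ≤ (a + s.sum)^2 := by linarith [add_sq a s.sum, Nat.zero_le (2*a*s.sum)]

lemma card_le_sum' (Q : Multiset ℕ) (h : ∀ x ∈ Q, 1 ≤ x) : Multiset.card Q ≤ Q.sum := by
  induction Q using Multiset.induction with
  | empty => simp
  | cons a s ih =>
    simp only [Multiset.card_cons, Multiset.sum_cons]
    have h1 := h a (Multiset.mem_cons_self a s)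
    have h2 := ih (fun x hx => h x (Multiset.mem_cons_of_mem hx))
    omega

lemma sumsq_lt' (Q : Multiset ℕ) (h1 : ∀ x ∈ Q, 1 ≤ x) (h2 : 2 ≤ Multiset.card Q) :
    (Q.map (fun x => x^2)).sum < Q.sum ^ 2 := by
  obtain ⟨a, R, rfl⟩ : ∃ a R, Q = a ::ₘ R := by
    rcases Multiset.exists_mem_of_ne_zero (show Q ≠ 0 by rintro rfl; simp at h2) with ⟨a, ha⟩
    exact ⟨a, Q.erase a, (Multiset.cons_erase ha).symm⟩
  simp only [Multiset.map_cons, Multiset.sum_cons, Multiset.card_cons] at *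
  have ha : 1 ≤ a := h1 a (Multiset.mem_cons_self a R)
  have hR : 1 ≤ R.sum := by
    have := card_le_sum' R (fun x hx => h1 x (Multiset.mem_cons_of_mem hx))
    omega
  have := sumsq_le' R
  nlinarith

lemma filter_sum' (N : Multiset ℕ) : (N.filter (fun x => x ≠ 0)).sum = N.sum := by
  have hsplit := Multiset.filter_add_not (fun x => x ≠ 0) N
  have hZ : (N.filter (fun x => ¬ x ≠ 0)).sum = 0 :=
    Multiset.sum_eq_zero (fun x hx => by have := Multiset.of_mem_filter hx; simpa using this)
  have := congrArg Multiset.sum hsplit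
  rw [Multiset.sum_add, hZ] at this
  omega

lemma filter_sumsq' (N : Multiset ℕ) :
    ((N.filter (fun x => x ≠ 0)).map (fun x => x^2)).sum = (N.map (fun x => x^2)).sum := by
  have hsplit := Multiset.filter_add_not (fun x => x ≠ 0) N
  have hZ : ((N.filter (fun x => ¬ x ≠ 0)).map (fun x => x^2)).sum = 0 :=
    Multiset.sum_eq_zero (fun y hy => by
      rcases Multiset.mem_map.1 hy with ⟨x, hx, rfl⟩
      have := Multiset.of_mem_filter hx; simp at this; simp [this])
  have := congrArg (fun t => (Multiset.map (fun x => x^2) t).sum) hsplit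
  simp only [Multiset.map_add, Multiset.sum_add] at this
  rw [hZ] at this
  omega

lemma recover' (N t : Multiset ℕ) (h : N.filter (fun x => x ≠ 0) = t) :
    N = t + Multiset.replicate (Multiset.card N - Multiset.card t) 0 := by
  have hsplit := Multiset.filter_add_not (fun x => x ≠ 0) N
  rw [h] at hsplit
  have hZ : N.filter (fun x => ¬ x ≠ 0)
      = Multiset.replicate (Multiset.card N - Multiset.card t) 0 := by
    rw [Multiset.eq_replicate]
    refine ⟨?_, fun b hb => by have := Multiset.of_mem_filter hb; simpa using this⟩
    have := congrArg Multiset.card hsplit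
    simp only [Multiset.card_add] at this
    omega
  have h2 : N = t + N.filter (fun x => ¬ x ≠ 0) := hsplit.symm
  rw [hZ] at h2
  exact h2

lemma key' (s : ℕ) (hs : 2 ≤ s) (N : Multiset ℕ) (hsum : N.sum = s)
    (hns : N.filter (fun x => x ≠ 0) ≠ {s}) :
    (N.map (fun x => x^2)).sum ≤ (s-1)^2 + 1 ∧
    ((N.map (fun x => x^2)).sum = (s-1)^2 + 1 ↔
      N.filter (fun x => x ≠ 0) = (s-1) ::ₘ {1}) := by
  classical
  set F := N.filter (fun x => x ≠ 0) with hFdef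
  have hFsum : F.sum = s := by rw [hFdef, filter_sum', hsum]
  have hFsq : (F.map (fun x => x^2)).sum = (N.map (fun x => x^2)).sum := filter_sumsq' N
  have hF1 : ∀ x ∈ F, 1 ≤ x := by
    intro x hx
    have := Multiset.of_mem_filter hx
    omega
  have hF0 : F ≠ 0 := by intro h; rw [h] at hFsum; simp at hFsum; omega
  have hFcard : 2 ≤ Multiset.card F := by
    by_contra h
    push_neg at h
    have : Multiset.card F = 0 ∨ Multiset.card F = 1 := by omega
    rcases this with h0 | h1
    · exact hF0 (Multiset.card_eq_zero.1 h0)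
    · obtain ⟨a, ha⟩ := Multiset.card_eq_one.1 h1
      rw [ha] at hFsum
      simp at hFsum
      rw [hFsum] at ha
      exact hns ha
  obtain ⟨a, ha⟩ := Multiset.exists_mem_of_ne_zero hF0
  have hFQ : F = a ::ₘ F.erase a := (Multiset.cons_erase ha).symm
  set Q := F.erase a with hQdef
  have ha1 : 1 ≤ a := hF1 a ha
  have hQ1 : ∀ x ∈ Q, 1 ≤ x := fun x hx => hF1 x (Multiset.mem_of_mem_erase hx)
  have hQcard : 1 ≤ Multiset.card Q := by
    have : Multiset.card F = Multiset.card Q + 1 := by rw [hFQ]; simp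
    omega
  have hbsum : 1 ≤ Q.sum := le_trans hQcard (card_le_sum' Q hQ1)
  have hab : a + Q.sum = s := by
    rw [hFQ] at hFsum
    simpa using hFsum
  have hsq : (N.map (fun x => x^2)).sum = a^2 + (Q.map (fun x => x^2)).sum := by
    rw [← hFsq, hFQ]
    simp
  have hQle := sumsq_le' Q
  obtain ⟨a', rfl⟩ : ∃ a', a = a' + 1 := ⟨a - 1, by omega⟩
  obtain ⟨b, hbdef⟩ : ∃ b, Q.sum = b + 1 := ⟨Q.sum - 1, by omega⟩
  have hs1 : s - 1 = a' + b + 1 := by omega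
  rw [hbdef] at hQle
  have hexp' : (s-1)^2 + 1 = (a'+1)^2 + (b+1)^2 + 2*(a'*b) := by
    rw [hs1]; ring
  have hle : (N.map (fun x => x^2)).sum ≤ (s-1)^2 + 1 := by
    rw [hsq, hexp']
    have : (0:ℕ) ≤ 2*(a'*b) := Nat.zero_le _
    linarith
  refine ⟨hle, ?_, ?_⟩
  · intro heq
    rw [hsq, hexp'] at heq
    have hQeq : (Q.map (fun x => x^2)).sum = (b+1)^2 := by
      linarith [Nat.zero_le (a'*b)]
    have hz : a' * b = 0 := by linarith
    have hQcard1 : Multiset.card Q = 1 := by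
      by_contra h
      have h2 : 2 ≤ Multiset.card Q := by omega
      have := sumsq_lt' Q hQ1 h2
      rw [hbdef] at this
      omega
    obtain ⟨c, hc⟩ := Multiset.card_eq_one.1 hQcard1
    have hcb : c = b + 1 := by rw [hc] at hbdef; simpa using hbdef
    rw [hcb] at hc
    rw [hFQ, hc]
    rcases Nat.mul_eq_zero.1 hz with h0 | h0
    · subst h0
      have hb : b + 1 = s - 1 := by omega
      rw [hb]
      exact Multiset.pair_comm 1 (s-1)
    · subst h0
      have hbv : a' + 1 = s - 1 := by omega
      rw [hbv]
  · intro hF2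
    rw [← hFsq, hF2]
    simp


/-- Among degree sequences of `k`-uniform hypertrees with `m ≥ 2` hyperedges other
than the hyperstar, the sum of squares is maximized by the sequence of
`S^{(k)}_{1,2,1,…,1}`: one vertex of degree `m-1`, one of degree `2`, the rest of
degree `1`; the value is `(m-1)² + 4 + (m(k-1)-1)`. -/
theorem stmt_11 (m k : ℕ) (hm : 2 ≤ m) (hk : 2 ≤ k)
    (d : Fin (m * (k - 1) + 1) → ℕ) (hpos : ∀ i, 1 ≤ d i)
    (hsum : ∑ i, d i = m * k)
    (hnotstar : Finset.univ.val.map d ≠ m ::ₘ Multiset.replicate (m * (k - 1)) 1) :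
    ∑ i, (d i) ^ 2 ≤ (m - 1) ^ 2 + 4 + (m * (k - 1) - 1) ∧
    (∑ i, (d i) ^ 2 = (m - 1) ^ 2 + 4 + (m * (k - 1) - 1) ↔
      Finset.univ.val.map d
        = (m - 1) ::ₘ 2 ::ₘ Multiset.replicate (m * (k - 1) - 1) 1) := by
  classical
  set N : Multiset ℕ := Finset.univ.val.map (fun i => d i - 1) with hNdef
  have hMN : Finset.univ.val.map d = N.map (fun x => x + 1) := by
    rw [hNdef, Multiset.map_map]
    exact Multiset.map_congr rfl (fun i _ => by have := hpos i; simp; omega)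
  have hcardN : Multiset.card N = m * (k - 1) + 1 := by
    rw [hNdef, Multiset.card_map]
    simp
  have hA2 : 2 ≤ m * (k - 1) := by
    calc 2 = 2 * 1 := by norm_num
    _ ≤ m * (k - 1) := Nat.mul_le_mul hm (by omega)
  have hmk : m * k = m * (k - 1) + m := by
    obtain ⟨k', hk'⟩ : ∃ k', k = k' + 1 := ⟨k - 1, by omega⟩
    subst hk'
    simp [Nat.mul_succ]
  have hNsum : N.sum = m - 1 := by
    have h1 : N.sum = ∑ i, (d i - 1) := rfl
    have h2 : ∑ i, (d i - 1) + ∑ _i : Fin (m * (k - 1) + 1), (1:ℕ) = ∑ i, d i := by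
      rw [← Finset.sum_add_distrib]
      exact Finset.sum_congr rfl (fun i _ => by have := hpos i; omega)
    have h3 : ∑ _i : Fin (m * (k - 1) + 1), (1:ℕ) = m * (k - 1) + 1 := by simp
    omega
  have hsumsq : ∑ i, (d i)^2 = (N.map (fun x => x^2)).sum + (2*(m-1) + (m * (k-1) + 1)) := by
    have h1 : ∑ i, (d i)^2 = (N.map (fun x => (x+1)^2)).sum := by
      rw [hNdef, Multiset.map_map]
      exact (congrArg Multiset.sum
        (Multiset.map_congr rfl (fun i _ => by
          have := hpos i
          simp only [Function.comp_apply]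
          rw [Nat.sub_add_cancel this]))).symm
    have h2 : (N.map (fun x => (x+1)^2)).sum
        = (N.map (fun x => x^2)).sum + (2*N.sum + Multiset.card N) := by
      have e1 : N.map (fun x => (x+1)^2) = N.map (fun x => x^2 + (2*x + 1)) :=
        Multiset.map_congr rfl (fun x _ => by ring)
      rw [e1, Multiset.sum_map_add]
      congr 1
      rw [Multiset.sum_map_add]
      congr 1
      · simpa using Multiset.sum_map_mul_left (a := (2:ℕ)) (f := fun x => x) (s := N)
      · simp [Multiset.map_const']
    rw [h1, h2, hNsum, hcardN]
  have hNe : N.filter (fun x => x ≠ 0) ≠ {m-1} := by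
    intro hF
    apply hnotstar
    have hrec := recover' N {m-1} hF
    rw [hcardN] at hrec
    simp only [Multiset.card_singleton] at hrec
    have hc : m * (k-1) + 1 - 1 = m * (k-1) := by omega
    rw [hc, Multiset.singleton_add] at hrec
    rw [hMN, hrec]
    simp only [Multiset.map_cons, Multiset.map_replicate]
    have hm1 : m - 1 + 1 = m := by omega
    rw [hm1]
  rcases eq_or_lt_of_le hm with hm2 | hm3
  · exfalso
    apply hNe
    have hFsum : (N.filter (fun x => x ≠ 0)).sum = m - 1 := by rw [filter_sum', hNsum]
    have hF1 : ∀ x ∈ N.filter (fun x => x ≠ 0), 1 ≤ x := fun x hx => by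
      have := Multiset.of_mem_filter hx; omega
    have hcle := card_le_sum' _ hF1
    have hF0 : N.filter (fun x => x ≠ 0) ≠ 0 := by
      intro h; rw [h] at hFsum; simp at hFsum; omega
    have hcpos : 0 < Multiset.card (N.filter (fun x => x ≠ 0)) := Multiset.card_pos.2 hF0
    have hc1 : Multiset.card (N.filter (fun x => x ≠ 0)) = 1 := by omega
    obtain ⟨a, ha⟩ := Multiset.card_eq_one.1 hc1
    rw [ha] at hFsum
    simp at hFsum
    rw [ha, hFsum]
  · have hs2 : 2 ≤ m - 1 := by omega
    obtain ⟨hle, hiff⟩ := key' (m-1) hs2 N hNsum hNe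
    have hmm : m - 1 - 1 = m - 2 := by omega
    rw [hmm] at hle hiff
    have hbridge : N.filter (fun x => x ≠ 0) = (m-2) ::ₘ {1} ↔
        Finset.univ.val.map d = (m-1) ::ₘ 2 ::ₘ Multiset.replicate (m*(k-1)-1) 1 := by
      constructor
      · intro hF
        have hrec := recover' N ((m-2) ::ₘ {1}) hF
        rw [hcardN] at hrec
        have hcard2 : Multiset.card ((m-2) ::ₘ ({1} : Multiset ℕ)) = 2 := by simp
        rw [hcard2] at hrec
        have hc : m*(k-1)+1-2 = m*(k-1)-1 := by omega
        rw [hc] at hrec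
        rw [hMN, hrec]
        simp only [Multiset.cons_add, Multiset.singleton_add, Multiset.map_cons,
          Multiset.map_replicate]
        have h1 : m - 2 + 1 = m - 1 := by omega
        rw [h1]
      · intro hM
        have hinj : Function.Injective (fun x : ℕ => x + 1) := add_left_injective 1
        have hN : N = (m-2) ::ₘ 1 ::ₘ Multiset.replicate (m*(k-1)-1) 0 := by
          apply Multiset.map_injective hinj
          rw [← hMN, hM]
          simp only [Multiset.map_cons, Multiset.map_replicate]
          have h1 : m - 2 + 1 = m - 1 := by omega
          rw [h1]
        rw [hN]
        have h20 : m - 2 ≠ 0 := by omega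
        have hfil : (Multiset.replicate (m*(k-1)-1) (0:ℕ)).filter (fun x => x ≠ 0) = 0 :=
          Multiset.filter_eq_nil.mpr (fun a ha => by
            have := Multiset.eq_of_mem_replicate ha; simp [this])
        simp [Multiset.filter_cons, h20, hfil]
    have hsq2 : (m-1)^2 = (m-2)^2 + (2*m-3) := by
      obtain ⟨m', hm'⟩ : ∃ m', m = m' + 3 := ⟨m - 3, by omega⟩
      subst hm'
      have e1 : m' + 3 - 1 = m' + 2 := by omega
      have e2 : m' + 3 - 2 = m' + 1 := by omega
      have e3 : 2*(m'+3) - 3 = 2*m' + 3 := by omega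
      rw [e1, e2, e3]
      ring
    rw [hsumsq]
    set S := (N.map (fun x => x^2)).sum with hS
    set P := (m-2)^2 with hP
    set Q2 := (m-1)^2 with hQ2
    set A := m * (k-1) with hA
    constructor
    · omega
    · constructor
      · intro h
        have hSeq : S = P + 1 := by omega
        exact hbridge.1 (hiff.1 hSeq)
      · intro h
        have := hiff.2 (hbridge.2 h)
        omega
end

section
/- Among the degree sequences of k-uniform linear unicyclic hypergraphs with m ≥ 4 hyperedges that are not the sequence of C_3^(k) ⊙ S_{m-3}^(k), the sum of squared degrees is maximized by the sequence of C^{(k)}_{3;m-4,1,0}: one vertex of degree m-2, one vertex of degree 3, one vertex of degree 2, and all remaining m(k-1)-3 vertices of degree 1. -/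
/-!
Let `A ≥ B` be the two largest degrees and `n` the number of vertices. Since there are at least
three degrees `≥ 2` and the degrees sum to `n + m`, we have `A + B ≤ m + 1`.

If `A + B = m + 1`, the degree sum forces the sequence `(A, B, 2, 1, …, 1)`; `B = 2` is the
excluded sequence, and otherwise the identity `A² + B² + 2 (A - 3) (B - 3) = (m - 2)² + 9` gives
the bound, with equality exactly when `B = 3`.

If `A + B ≤ m`, every degree `x` other than `A` lies in `[1, B]`, so `x² ≤ (B + 1) x - B`.
Summing gives `∑ d² ≤ A² + (B + 1) (m - A) + B + n`, which is strictly below the bound.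
-/

open Finset

theorem sq_add_le_succ_mul {x b : ℕ} (h1 : 1 ≤ x) (hb : x ≤ b) : x ^ 2 + b ≤ (b + 1) * x := by
  nlinarith

theorem sq_add_succ_mul_sub_add_lt {a b m : ℤ} (hb : 2 ≤ b) (hba : b ≤ a) (hab : a + b ≤ m) :
    a ^ 2 + (b + 1) * (m - a) + b < (m - 2) ^ 2 + 10 := by
  have hr : 0 ≤ m - b - a := by linarith
  nlinarith [mul_nonneg (sub_nonneg.2 hba) hr, mul_nonneg (by linarith : 0 ≤ m - b - 1) hr,
    mul_nonneg (sub_nonneg.2 hb) hr, mul_nonneg (sub_nonneg.2 hb) (sub_nonneg.2 hba),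
    sq_nonneg (2 * b - 5)]

theorem sq_add_sq_add_two_mul {a b m : ℤ} (hab : a + b = m + 1) :
    a ^ 2 + b ^ 2 + 2 * ((a - 3) * (b - 3)) = (m - 2) ^ 2 + 9 := by
  linear_combination (a + b + m - 5) * hab

section

variable {ι : Type*}

theorem Finset.sum_sq_add_card_mul_le {s : Finset ι} {f : ι → ℕ} {b : ℕ}
    (h1 : ∀ i ∈ s, 1 ≤ f i) (hb : ∀ i ∈ s, f i ≤ b) :
    ∑ i ∈ s, f i ^ 2 + #s * b ≤ (b + 1) * ∑ i ∈ s, f i := by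
  rw [mul_sum, ← smul_eq_mul, ← sum_const, ← sum_add_distrib]
  exact sum_le_sum fun i hi => sq_add_le_succ_mul (h1 i hi) (hb i hi)

theorem Finset.card_le_sum_of_one_le {s : Finset ι} {f : ι → ℕ} (h1 : ∀ i ∈ s, 1 ≤ f i) :
    #s ≤ ∑ i ∈ s, f i := by
  simpa using card_nsmul_le_sum s f 1 h1

theorem Finset.eq_one_of_sum_le_card {s : Finset ι} {f : ι → ℕ}
    (h1 : ∀ i ∈ s, 1 ≤ f i) (hs : ∑ i ∈ s, f i ≤ #s) : ∀ i ∈ s, f i = 1 := by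
  have hsum : ∑ i ∈ s, 1 = ∑ i ∈ s, f i := by
    simpa using le_antisymm (card_le_sum_of_one_le h1) hs
  exact fun i hi => ((sum_eq_sum_iff_of_le h1).1 hsum i hi).symm

variable [Fintype ι]

theorem exists_top_two_of_three_le_card {α : Type*} [LinearOrder α] {d : ι → α} {c : α}
    [DecidablePred (c ≤ d ·)] (h : 3 ≤ #{i | c ≤ d i}) :
    ∃ i₀ i₁ i₂, i₁ ≠ i₀ ∧ i₂ ≠ i₀ ∧ i₂ ≠ i₁ ∧
      (∀ j, d j ≤ d i₀) ∧ (∀ j ≠ i₀, d j ≤ d i₁) ∧ c ≤ d i₂ := by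
  classical
  have hcard : 3 ≤ Fintype.card ι := h.trans (card_le_univ _)
  obtain ⟨i₀, -, hmax₀⟩ :=
    exists_max_image univ d (univ_nonempty_iff.2 (Fintype.card_pos_iff.1 (by omega)))
  obtain ⟨i₁, hi₁, hmax₁⟩ := exists_max_image (univ.erase i₀) d
    (card_pos.1 (by rw [card_erase_of_mem (mem_univ _), card_univ]; omega))
  obtain ⟨i₂, hi₂, hi₂₀₁⟩ := exists_mem_notMem_of_card_lt_card (s := {i₀, i₁})
    (h.trans_lt' (card_le_two.trans_lt (by norm_num)))
  simp only [mem_insert, mem_singleton, not_or] at hi₂₀₁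
  exact ⟨i₀, i₁, i₂, ne_of_mem_erase hi₁, hi₂₀₁.1, hi₂₀₁.2, fun j => hmax₀ j (mem_univ j),
    fun j hj => hmax₁ j (mem_erase.2 ⟨hj, mem_univ j⟩), (mem_filter.1 hi₂).2⟩

theorem exists_univ_val_map_eq_cons_cons_cons {α : Type*} (d : ι → α) {i₀ i₁ i₂ : ι}
    (h₁₀ : i₁ ≠ i₀) (h₂₀ : i₂ ≠ i₀) (h₂₁ : i₂ ≠ i₁) :
    ∃ R : Finset ι, #R = Fintype.card ι - 3 ∧
      univ.val.map d = d i₀ ::ₘ d i₁ ::ₘ d i₂ ::ₘ R.val.map d := by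
  classical
  have h₁ : i₁ ∈ univ.erase i₀ := mem_erase.2 ⟨h₁₀, mem_univ _⟩
  have h₂ : i₂ ∈ (univ.erase i₀).erase i₁ := mem_erase.2 ⟨h₂₁, mem_erase.2 ⟨h₂₀, mem_univ _⟩⟩
  refine ⟨((univ.erase i₀).erase i₁).erase i₂, ?_, ?_⟩
  · rw [card_erase_of_mem h₂, card_erase_of_mem h₁, card_erase_of_mem (mem_univ _), card_univ]
    omega
  · rw [erase_val, ← Multiset.map_cons, Multiset.cons_erase h₂, erase_val, ← Multiset.map_cons,
      Multiset.cons_erase h₁, erase_val, ← Multiset.map_cons, Multiset.cons_erase (mem_univ _)]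

theorem add_add_add_le_sum {d : ι → ℕ} (hpos : ∀ i, 1 ≤ d i) {i₀ i₁ i₂ : ι}
    (h₁₀ : i₁ ≠ i₀) (h₂₀ : i₂ ≠ i₀) (h₂₁ : i₂ ≠ i₁) :
    d i₀ + d i₁ + d i₂ + (Fintype.card ι - 3) ≤ ∑ i, d i := by
  obtain ⟨R, hR, hmap⟩ := exists_univ_val_map_eq_cons_cons_cons d h₁₀ h₂₀ h₂₁
  have hR₁ := card_le_sum_of_one_le (s := R) fun j _ => hpos j
  rw [sum_eq_multiset_sum, hmap, ← hR]
  simp only [Multiset.sum_cons, ← sum_eq_multiset_sum]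
  omega

theorem univ_val_map_eq_of_sum_le {d : ι → ℕ} (hpos : ∀ i, 1 ≤ d i) {i₀ i₁ i₂ : ι}
    (h₁₀ : i₁ ≠ i₀) (h₂₀ : i₂ ≠ i₀) (h₂₁ : i₂ ≠ i₁)
    (hsum : ∑ i, d i ≤ d i₀ + d i₁ + d i₂ + (Fintype.card ι - 3)) :
    univ.val.map d = d i₀ ::ₘ d i₁ ::ₘ d i₂ ::ₘ Multiset.replicate (Fintype.card ι - 3) 1 := by
  obtain ⟨R, hR, hmap⟩ := exists_univ_val_map_eq_cons_cons_cons d h₁₀ h₂₀ h₂₁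
  rw [sum_eq_multiset_sum, hmap, ← hR] at hsum
  simp only [Multiset.sum_cons, ← sum_eq_multiset_sum] at hsum
  have hones := eq_one_of_sum_le_card (fun j _ => hpos j) (by omega : ∑ j ∈ R, d j ≤ #R)
  rw [hmap, Multiset.map_congr rfl hones, Multiset.map_const', ← hR]
  rfl

theorem sum_sq_eq_of_univ_val_map_eq {d : ι → ℕ} {a b c : ℕ}
    (h : univ.val.map d = a ::ₘ b ::ₘ c ::ₘ Multiset.replicate (Fintype.card ι - 3) 1) :
    ∑ i, d i ^ 2 = a ^ 2 + b ^ 2 + c ^ 2 + (Fintype.card ι - 3) := by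
  rw [sum_eq_multiset_sum, ← Function.comp_def (· ^ 2) d, ← Multiset.map_map, h]
  simp [add_assoc]

theorem sum_sq_lt_of_add_le {d : ι → ℕ} {m : ℕ} (hpos : ∀ i, 1 ≤ d i)
    (hsum : ∑ i, d i = Fintype.card ι + m) {i₀ i₁ : ι} (hmax₀ : ∀ j, d j ≤ d i₀)
    (hmax₁ : ∀ j ≠ i₀, d j ≤ d i₁) (h₁ : 2 ≤ d i₁) (hle : d i₀ + d i₁ ≤ m) :
    ∑ i, d i ^ 2 < (m - 2) ^ 2 + 10 + Fintype.card ι := by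
  classical
  have hrest := (univ.erase i₀).sum_sq_add_card_mul_le (fun j _ => hpos j)
    (fun j hj => hmax₁ j (ne_of_mem_erase hj))
  rw [card_erase_of_mem (mem_univ _), card_univ] at hrest
  have hsum₀ := add_sum_erase univ d (mem_univ i₀)
  have hsq₀ := add_sum_erase univ (d · ^ 2) (mem_univ i₀)
  have hcard : 1 ≤ Fintype.card ι := Fintype.card_pos_iff.2 ⟨i₀⟩
  have key := sq_add_succ_mul_sub_add_lt (a := d i₀) (b := d i₁) (m := m) (by exact_mod_cast h₁)
    (by exact_mod_cast hmax₀ i₁) (by exact_mod_cast hle)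
  zify [hcard, (by omega : 2 ≤ m)] at *
  nlinarith

theorem sum_sq_le_of_three_le_card {d : ι → ℕ} {m : ℕ} (hpos : ∀ i, 1 ≤ d i)
    (hsum : ∑ i, d i = Fintype.card ι + m) (hcyc : 3 ≤ #{i | 2 ≤ d i})
    (hnot : univ.val.map d ≠ (m - 1) ::ₘ 2 ::ₘ 2 ::ₘ Multiset.replicate (Fintype.card ι - 3) 1) :
    ∑ i, d i ^ 2 ≤ (m - 2) ^ 2 + 3 ^ 2 + 2 ^ 2 + (Fintype.card ι - 3) ∧
    (∑ i, d i ^ 2 = (m - 2) ^ 2 + 3 ^ 2 + 2 ^ 2 + (Fintype.card ι - 3) ↔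
      univ.val.map d = (m - 2) ::ₘ 3 ::ₘ 2 ::ₘ Multiset.replicate (Fintype.card ι - 3) 1) := by
  suffices h : ∑ i, d i ^ 2 ≤ (m - 2) ^ 2 + 3 ^ 2 + 2 ^ 2 + (Fintype.card ι - 3) ∧
      (∑ i, d i ^ 2 = (m - 2) ^ 2 + 3 ^ 2 + 2 ^ 2 + (Fintype.card ι - 3) →
        univ.val.map d = (m - 2) ::ₘ 3 ::ₘ 2 ::ₘ Multiset.replicate (Fintype.card ι - 3) 1) from
    ⟨h.1, h.2, sum_sq_eq_of_univ_val_map_eq⟩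
  obtain ⟨i₀, i₁, i₂, h₁₀, h₂₀, h₂₁, hmax₀, hmax₁, h₂⟩ := exists_top_two_of_three_le_card hcyc
  have hcard : 3 ≤ Fintype.card ι := hcyc.trans (card_le_univ _)
  have hsplit := add_add_add_le_sum hpos h₁₀ h₂₀ h₂₁
  have h₁ : 2 ≤ d i₁ := h₂.trans (hmax₁ i₂ h₂₀)
  have hBA := hmax₀ i₁
  rcases (by omega : d i₀ + d i₁ ≤ m ∨ d i₀ + d i₁ = m + 1) with hle | heq
  · have := sum_sq_lt_of_add_le hpos hsum hmax₀ hmax₁ h₁ hle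
    constructor <;> omega
  have hmap := univ_val_map_eq_of_sum_le hpos h₁₀ h₂₀ h₂₁ (by omega)
  rw [(by omega : d i₂ = 2)] at hmap
  have hB : 3 ≤ d i₁ := by
    by_contra hB
    apply hnot
    rw [hmap, (by omega : d i₁ = 2), (by omega : d i₀ = m - 1)]
  have hQ := sum_sq_eq_of_univ_val_map_eq hmap
  have hid := sq_add_sq_add_two_mul (a := d i₀) (b := d i₁) (m := m) (by exact_mod_cast heq)
  have hprod := mul_nonneg (by omega : (0 : ℤ) ≤ d i₀ - 3) (by omega : (0 : ℤ) ≤ d i₁ - 3)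
  zify [hcard, (by omega : 2 ≤ m)] at hQ hid
  refine ⟨by zify [hcard, (by omega : 2 ≤ m)]; linarith, fun h => ?_⟩
  zify [hcard, (by omega : 2 ≤ m)] at h
  have hB3 : d i₁ = 3 := by
    rcases mul_eq_zero.1 (by linarith : ((d i₀ : ℤ) - 3) * (d i₁ - 3) = 0) with h' | h' <;> omega
  rw [hmap, hB3, (by omega : d i₀ = m - 2)]

end

theorem stmt_16_general (m k : ℕ) (hk : 2 ≤ k)
    (d : Fin (m * (k - 1)) → ℕ) (hpos : ∀ i, 1 ≤ d i)
    (hsum : ∑ i, d i = m * k)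
    (hcyc : 3 ≤ (Finset.univ.filter fun i => 2 ≤ d i).card)
    (hnot : Finset.univ.val.map d
      ≠ (m - 1) ::ₘ 2 ::ₘ 2 ::ₘ Multiset.replicate (m * (k - 1) - 3) 1) :
    ∑ i, (d i) ^ 2 ≤ (m - 2) ^ 2 + 3 ^ 2 + 2 ^ 2 + (m * (k - 1) - 3) ∧
    (∑ i, (d i) ^ 2 = (m - 2) ^ 2 + 3 ^ 2 + 2 ^ 2 + (m * (k - 1) - 3) ↔
      Finset.univ.val.map d
        = (m - 2) ::ₘ 3 ::ₘ 2 ::ₘ Multiset.replicate (m * (k - 1) - 3) 1) := by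
  have hsum' : ∑ i, d i = Fintype.card (Fin (m * (k - 1))) + m := by
    rw [hsum, Fintype.card_fin, ← Nat.mul_add_one, Nat.sub_add_cancel (by omega)]
  simpa only [Fintype.card_fin] using
    sum_sq_le_of_three_le_card hpos hsum' hcyc (by rwa [Fintype.card_fin])

/-- Among degree sequences of `k`-uniform linear unicyclic hypergraphs with `m ≥ 4`
hyperedges other than that of `C₃^{(k)} ⊙ S_{m-3}^{(k)}`, the sum of squares is
maximized by the sequence of `C^{(k)}_{3;m-4,1,0}`: one vertex of degree `m-2`,
one of degree `3`, one of degree `2`, and `m(k-1)-3` of degree `1`. -/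
theorem stmt_16 (m k : ℕ) (hm : 4 ≤ m) (hk : 2 ≤ k)
    (d : Fin (m * (k - 1)) → ℕ) (hpos : ∀ i, 1 ≤ d i)
    (hsum : ∑ i, d i = m * k)
    (hcyc : 3 ≤ (Finset.univ.filter fun i => 2 ≤ d i).card)
    (hnot : Finset.univ.val.map d
      ≠ (m - 1) ::ₘ 2 ::ₘ 2 ::ₘ Multiset.replicate (m * (k - 1) - 3) 1) :
    ∑ i, (d i) ^ 2 ≤ (m - 2) ^ 2 + 3 ^ 2 + 2 ^ 2 + (m * (k - 1) - 3) ∧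
    (∑ i, (d i) ^ 2 = (m - 2) ^ 2 + 3 ^ 2 + 2 ^ 2 + (m * (k - 1) - 3) ↔
      Finset.univ.val.map d
        = (m - 2) ::ₘ 3 ::ₘ 2 ::ₘ Multiset.replicate (m * (k - 1) - 3) 1) :=
  stmt_16_general m k hk d hpos hsum hcyc hnot
end
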